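/- Let G be a game with no cycle of total weight zero, let F be a set of vertices containing N = N_G such that the supΣ^N-value is finite on F, let H be the subgame obtained by removing F from G (assumed to be a subgame), let φ_H be a reducing potential for H, and let H^+ = ZP_{φ_H} and H^- = ZN_{φ_H}. Assume there is an edge from H^+ ∩ V_Min to F, and let vv' be such an edge minimising w(vv') + supΣ^N-value(v') − φ_H(v). Then supΣ^N-value(v) = supΣ^N-value(v') + w(vv'). -/
import Mathlib


/-!
Basic definitions for mean-payoff games: games, infinite paths, positional
strategies, the valuations MP, supΣ^X and infΣ^X, values of vertices,
zones N, P, ZN, ZP (also relative to a sub-arena), reduced games,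
potentials and potential reductions, traps.
-/

/-- A game: a sinkless directed graph with integer weights, whose vertices are
partitioned into Min-vertices (`IsMin`) and Max-vertices (`¬ IsMin`). -/
structure MPGame (V : Type*) where
  E : V → V → Prop
  w : V → V → ℤ
  IsMin : V → Prop
  sinkless : ∀ v, ∃ v', E v v'

namespace MPGame

variable {V : Type*}

/-- An infinite path in a game. -/
structure Path (G : MPGame V) where
  vert : ℕ → V
  adj : ∀ i, G.E (vert i) (vert (i + 1))

/-- The sum of the weights of the first `k` edges of a path. -/
def Path.wsum {G : MPGame V} (π : G.Path) (k : ℕ) : ℤ :=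
  ∑ i ∈ Finset.range k, G.w (π.vert i) (π.vert (i + 1))

/-- The tail of a path (drop the first vertex). -/
def Path.tail {G : MPGame V} (π : G.Path) : G.Path :=
  ⟨fun i => π.vert (i + 1), fun i => π.adj (i + 1)⟩

/-- A positional strategy `σ : V → V` is legal if it always follows an edge. -/
def Legal (G : MPGame V) (σ : V → V) : Prop := ∀ v, G.E v (σ v)

/-- Consistency of a path with a positional Min-strategy. -/
def Path.ConsMin {G : MPGame V} (π : G.Path) (σ : V → V) : Prop :=
  ∀ i, G.IsMin (π.vert i) → π.vert (i + 1) = σ (π.vert i)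

/-- Consistency of a path with a positional Max-strategy. -/
def Path.ConsMax {G : MPGame V} (π : G.Path) (τ : V → V) : Prop :=
  ∀ i, ¬ G.IsMin (π.vert i) → π.vert (i + 1) = τ (π.vert i)

/-- The mean-payoff valuation `MP(π) = limsup_k (1/k) ∑_{i<k} w_i`. -/
noncomputable def MP {G : MPGame V} (π : G.Path) : EReal :=
  Filter.limsup (fun k => (((π.wsum k : ℝ) / (k : ℝ)) : EReal)) Filter.atTop

/-- `supΣ^X(π) = sup_{k ≤ n_X} ∑_{i<k} w_i`, where `n_X` is the first hitting
time of `X` (all `k` if `X` is never hit). -/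
noncomputable def supSigma {G : MPGame V} (X : Set V) (π : G.Path) : EReal :=
  ⨆ k : {k : ℕ // ∀ i < k, π.vert i ∉ X}, ((π.wsum k.1 : ℝ) : EReal)

/-- `infΣ^X(π) = inf_{k ≤ n_X} ∑_{i<k} w_i`. -/
noncomputable def infSigma {G : MPGame V} (X : Set V) (π : G.Path) : EReal :=
  ⨅ k : {k : ℕ // ∀ i < k, π.vert i ∉ X}, ((π.wsum k.1 : ℝ) : EReal)

/-- `inf_σ sup_{π ⊨ σ, π from v} val(π)`, over legal positional Min-strategies. -/
noncomputable def minVal (G : MPGame V) (val : G.Path → EReal) (v : V) : EReal :=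
  ⨅ σ : {σ : V → V // G.Legal σ},
    ⨆ π : {π : G.Path // π.vert 0 = v ∧ π.ConsMin σ.1}, val π.1

/-- `sup_τ inf_{π ⊨ τ, π from v} val(π)`, over legal positional Max-strategies. -/
noncomputable def maxVal (G : MPGame V) (val : G.Path → EReal) (v : V) : EReal :=
  ⨆ τ : {τ : V → V // G.Legal τ},
    ⨅ π : {π : G.Path // π.vert 0 = v ∧ π.ConsMax τ.1}, val π.1

/-- The MP-value of a vertex. -/
noncomputable def MPval (G : MPGame V) (v : V) : EReal := G.minVal MP v

/-- The `supΣ^X`-value of a vertex. -/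
noncomputable def supSigmaVal (G : MPGame V) (X : Set V) (v : V) : EReal :=
  G.minVal (supSigma X) v

/-- The `infΣ^X`-value of a vertex. -/
noncomputable def infSigmaVal (G : MPGame V) (X : Set V) (v : V) : EReal :=
  G.minVal (infSigma X) v

/-- `G` has no cycle of total weight zero: no path repeats a vertex with the
same partial sum of weights. -/
def NoZeroCycle (G : MPGame V) : Prop :=
  ∀ (π : G.Path) (i j : ℕ), i < j → π.vert i = π.vert j → π.wsum i ≠ π.wsum j

/-- The zone `N` of the subgame of `G` induced on `D`: vertices whose
immediately optimal edges (within `D`) have weight `< 0`. -/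
def NsetOn (G : MPGame V) (D : Set V) : Set V :=
  {v | v ∈ D ∧ ((G.IsMin v ∧ ∃ v' ∈ D, G.E v v' ∧ G.w v v' < 0) ∨
      (¬ G.IsMin v ∧ ∀ v' ∈ D, G.E v v' → G.w v v' < 0))}

/-- The zone `P` of the subgame of `G` induced on `D`. -/
def PsetOn (G : MPGame V) (D : Set V) : Set V :=
  {v | v ∈ D ∧ ((¬ G.IsMin v ∧ ∃ v' ∈ D, G.E v v' ∧ 0 < G.w v v') ∨
      (G.IsMin v ∧ ∀ v' ∈ D, G.E v v' → 0 < G.w v v'))}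

/-- The zone `N` of `G`. -/
def Nset (G : MPGame V) : Set V := G.NsetOn Set.univ

/-- The zone `P` of `G`. -/
def Pset (G : MPGame V) : Set V := G.PsetOn Set.univ

/-- The zone `ZN` of the subgame of `G` induced on `D`: vertices from which
Min can force that an edge of weight `< 0` is visited before any edge of
weight `> 0` (staying within `D`). -/
inductive ZNr (G : MPGame V) (D : Set V) : V → Prop
  | minNeg (v v' : V) : v ∈ D → G.IsMin v → v' ∈ D → G.E v v' → G.w v v' < 0 →
      ZNr G D v
  | minZero (v v' : V) : v ∈ D → G.IsMin v → v' ∈ D → G.E v v' → G.w v v' = 0 →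
      ZNr G D v' → ZNr G D v
  | max (v : V) : v ∈ D → ¬ G.IsMin v →
      (∀ v' ∈ D, G.E v v' → G.w v v' ≤ 0) →
      (∀ v', v' ∈ D → G.E v v' → G.w v v' = 0 → ZNr G D v') →
      ZNr G D v

/-- The zone `ZP` of the subgame of `G` induced on `D`. -/
inductive ZPr (G : MPGame V) (D : Set V) : V → Prop
  | maxPos (v v' : V) : v ∈ D → ¬ G.IsMin v → v' ∈ D → G.E v v' → 0 < G.w v v' →
      ZPr G D v
  | maxZero (v v' : V) : v ∈ D → ¬ G.IsMin v → v' ∈ D → G.E v v' → G.w v v' = 0 →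
      ZPr G D v' → ZPr G D v
  | min (v : V) : v ∈ D → G.IsMin v →
      (∀ v' ∈ D, G.E v v' → 0 ≤ G.w v v') →
      (∀ v', v' ∈ D → G.E v v' → G.w v v' = 0 → ZPr G D v') →
      ZPr G D v

/-- The zone `ZN` of `G`. -/
def ZN (G : MPGame V) : V → Prop := G.ZNr Set.univ

/-- The zone `ZP` of `G`. -/
def ZP (G : MPGame V) : V → Prop := G.ZPr Set.univ

/-- The subgame of `G` induced on `D` is reduced: from every vertex of `ZN`,
Min can force that the first edge visited has weight `≤ 0` and leads into
`ZN`, and symmetrically for `ZP` and Max. -/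
def ReducedOn (G : MPGame V) (D : Set V) : Prop :=
  (∀ v, G.ZNr D v →
     (G.IsMin v → ∃ v' ∈ D, G.E v v' ∧ G.w v v' ≤ 0 ∧ G.ZNr D v') ∧
     (¬ G.IsMin v → ∀ v' ∈ D, G.E v v' → G.w v v' ≤ 0 ∧ G.ZNr D v')) ∧
  (∀ v, G.ZPr D v →
     (¬ G.IsMin v → ∃ v' ∈ D, G.E v v' ∧ 0 ≤ G.w v v' ∧ G.ZPr D v') ∧
     (G.IsMin v → ∀ v' ∈ D, G.E v v' → 0 ≤ G.w v v' ∧ G.ZPr D v'))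

/-- `G` is reduced. -/
def Reduced (G : MPGame V) : Prop := G.ReducedOn Set.univ

/-- The subgame of `G` induced on `D` is positively reduced: `ZN = ∅`. -/
def PosReducedOn (G : MPGame V) (D : Set V) : Prop := ∀ v, ¬ G.ZNr D v

/-- `A` is a trap for Min: a sinkless subgraph from which Min cannot escape. -/
def TrapForMin (G : MPGame V) (A : Set V) : Prop :=
  (∀ v ∈ A, ∃ v' ∈ A, G.E v v') ∧
  ∀ v ∈ A, G.IsMin v → ∀ v', G.E v v' → v' ∈ A

/-- `A` is a trap for Max: a sinkless subgraph from which Max cannot escape. -/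
def TrapForMax (G : MPGame V) (A : Set V) : Prop :=
  (∀ v ∈ A, ∃ v' ∈ A, G.E v v') ∧
  ∀ v ∈ A, ¬ G.IsMin v → ∀ v', G.E v v' → v' ∈ A

/-- The potential reduction of `G` by the potential `φ`. -/
def pot (G : MPGame V) (φ : V → ℤ) : MPGame V where
  E := G.E
  w := fun v v' => G.w v v' + φ v' - φ v
  IsMin := G.IsMin
  sinkless := G.sinkless

/-! ### Auxiliary lemmas for Statement 10 -/

section Aux

variable {G : MPGame V}

lemma Path.wsum_zero' (π : G.Path) : π.wsum 0 = 0 := by simp [Path.wsum]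

lemma Path.wsum_succ' (π : G.Path) (k : ℕ) :
    π.wsum (k + 1) = π.wsum k + G.w (π.vert k) (π.vert (k + 1)) :=
  Finset.sum_range_succ _ _

/-- The path obtained by following a function `f` everywhere. -/
def iterPath (G : MPGame V) (f : V → V) (hf : ∀ u, G.E u (f u)) (v : V) : G.Path where
  vert i := f^[i] v
  adj i := by
    show G.E (f^[i] v) (f^[i + 1] v)
    rw [Function.iterate_succ_apply' f i v]; exact hf _

@[simp] lemma iterPath_vert_zero (f : V → V) (hf : ∀ u, G.E u (f u)) (v : V) :
    (iterPath G f hf v).vert 0 = v := rfl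

lemma iterPath_vert_succ (f : V → V) (hf : ∀ u, G.E u (f u)) (v : V) (i : ℕ) :
    (iterPath G f hf v).vert (i + 1) = f ((iterPath G f hf v).vert i) :=
  Function.iterate_succ_apply' f i v

lemma iterPath_consMin (f : V → V) (hf : ∀ u, G.E u (f u)) (v : V) (σ : V → V)
    (h : ∀ u, G.IsMin u → f u = σ u) : (iterPath G f hf v).ConsMin σ := fun i hi => by
  rw [iterPath_vert_succ]; exact h _ hi

/-- Concatenation of a finite prefix of `π` (of length `m`) with `μ`. -/
def concatPath (π μ : G.Path) (m : ℕ) (h : μ.vert 0 = π.vert m) : G.Path where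
  vert j := if j < m then π.vert j else μ.vert (j - m)
  adj i := by
    by_cases h1 : i + 1 < m
    · simp only [if_pos (by omega : i < m), if_pos h1]; exact π.adj i
    · by_cases h2 : i < m
      · have him : i + 1 = m := by omega
        simp only [if_pos h2, if_neg h1]
        have h3 : i + 1 - m = 0 := by omega
        rw [h3, h, ← him]
        exact π.adj i
      · simp only [if_neg h2, if_neg h1]
        have h3 : i + 1 - m = (i - m) + 1 := by omega
        rw [h3]; exact μ.adj (i - m)

lemma concatPath_vert_lt {π μ : G.Path} {m : ℕ} {h : μ.vert 0 = π.vert m} {j : ℕ}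
    (hj : j < m) : (concatPath π μ m h).vert j = π.vert j := if_pos hj

lemma concatPath_vert_ge {π μ : G.Path} {m : ℕ} {h : μ.vert 0 = π.vert m} {j : ℕ}
    (hj : m ≤ j) : (concatPath π μ m h).vert j = μ.vert (j - m) := if_neg (by omega)

lemma concatPath_vert_zero {π μ : G.Path} {m : ℕ} {h : μ.vert 0 = π.vert m} :
    (concatPath π μ m h).vert 0 = π.vert 0 := by
  rcases Nat.eq_zero_or_pos m with hm | hm
  · subst hm; simpa [concatPath] using h
  · exact if_pos hm

lemma concatPath_wsum {π μ : G.Path} {m : ℕ} {h : μ.vert 0 = π.vert m} (k : ℕ) :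
    (concatPath π μ m h).wsum (m + k) = π.wsum m + μ.wsum k := by
  induction k with
  | zero =>
    rw [Nat.add_zero, Path.wsum_zero', add_zero]
    unfold Path.wsum
    refine Finset.sum_congr rfl fun i hi => ?_
    rw [Finset.mem_range] at hi
    have e1 : (concatPath π μ m h).vert i = π.vert i := concatPath_vert_lt hi
    have e2 : (concatPath π μ m h).vert (i + 1) = π.vert (i + 1) := by
      by_cases h1 : i + 1 < m
      · exact concatPath_vert_lt h1
      · have him : i + 1 = m := by omega
        rw [concatPath_vert_ge (by omega), show i + 1 - m = 0 by omega, h, him]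
    rw [e1, e2]
  | succ k ih =>
    rw [show m + (k + 1) = (m + k) + 1 by omega, Path.wsum_succ', ih, Path.wsum_succ']
    have hv1 : (concatPath π μ m h).vert (m + k) = μ.vert k := by
      rw [concatPath_vert_ge (by omega)]; congr 1; omega
    have hv2 : (concatPath π μ m h).vert (m + k + 1) = μ.vert (k + 1) := by
      rw [concatPath_vert_ge (by omega)]; congr 1; omega
    rw [hv1, hv2]; ring

lemma concatPath_consMin {π μ : G.Path} {m : ℕ} {h : μ.vert 0 = π.vert m} (σ : V → V)
    (hπ : ∀ i < m, G.IsMin (π.vert i) → π.vert (i + 1) = σ (π.vert i))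
    (hμ : μ.ConsMin σ) : (concatPath π μ m h).ConsMin σ := by
  intro i hi
  by_cases h2 : i < m
  · rw [concatPath_vert_lt h2] at hi ⊢
    by_cases h1 : i + 1 < m
    · rw [concatPath_vert_lt h1]; exact hπ i h2 hi
    · rw [concatPath_vert_ge (le_of_not_gt h1), show i + 1 - m = 0 by omega, h,
        show m = i + 1 by omega]
      exact hπ i h2 hi
  · rw [concatPath_vert_ge (le_of_not_gt h2)] at hi ⊢
    rw [concatPath_vert_ge (by omega), show i + 1 - m = (i - m) + 1 by omega]
    exact hμ (i - m) hi

/-- Dropping the first `n` vertices of a path. -/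
def dropPath (π : G.Path) (n : ℕ) : G.Path where
  vert i := π.vert (n + i)
  adj i := by
    have h := π.adj (n + i)
    rwa [show n + i + 1 = n + (i + 1) by omega] at h

@[simp] lemma dropPath_vert (π : G.Path) (n i : ℕ) :
    (dropPath π n).vert i = π.vert (n + i) := rfl

lemma dropPath_wsum (π : G.Path) (n k : ℕ) :
    (dropPath π n).wsum k = π.wsum (n + k) - π.wsum n := by
  induction k with
  | zero => simp [Path.wsum_zero']
  | succ k ih =>
    rw [show n + (k + 1) = (n + k) + 1 by omega, Path.wsum_succ', Path.wsum_succ', ih]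
    have h1 : (dropPath π n).vert k = π.vert (n + k) := rfl
    have h2 : (dropPath π n).vert (k + 1) = π.vert (n + k + 1) := rfl
    rw [h1, h2]; ring

lemma coe_wsum_le_supSigma {X : Set V} (π : G.Path) (k : ℕ)
    (hk : ∀ i < k, π.vert i ∉ X) : ((π.wsum k : ℝ) : EReal) ≤ supSigma X π :=
  le_iSup (fun k : {k : ℕ // ∀ i < k, π.vert i ∉ X} => ((π.wsum k.1 : ℝ) : EReal)) ⟨k, hk⟩

lemma supSigma_nonneg {X : Set V} (π : G.Path) : (0 : EReal) ≤ supSigma X π := by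
  have h := coe_wsum_le_supSigma (X := X) π 0 (by omega)
  simpa [Path.wsum_zero'] using h

lemma supSigmaVal_nonneg (G : MPGame V) (X : Set V) (u : V) :
    (0 : EReal) ≤ G.supSigmaVal X u := by
  refine le_iInf fun σ => ?_
  exact le_trans (supSigma_nonneg _)
    (le_iSup (fun π : {π : G.Path // π.vert 0 = u ∧ π.ConsMin σ.1} => supSigma X π.1)
      ⟨iterPath G σ.1 σ.2 u, rfl, iterPath_consMin _ _ _ _ (fun _ _ => rfl)⟩)

lemma ZPr.memD {D : Set V} {u : V} (h : G.ZPr D u) : u ∈ D := by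
  cases h <;> assumption

end Aux

end MPGame

lemma ereal_le_of_forall_real_lt {a : ℝ} {b : EReal}
    (h : ∀ c : ℝ, c < a → (c : EReal) < b) : (a : EReal) ≤ b := by
  by_contra hb
  push_neg at hb
  obtain ⟨y, hy1, hy2⟩ := EReal.exists_between_coe_real hb
  exact absurd (h y (EReal.coe_lt_coe_iff.mp hy2)) (not_lt.mpr hy1.le)

open MPGame in
/-- Lemma 3a: let `F ⊇ N` be a set of vertices on which
the `supΣ^N`-value is finite (given by `g : V → ℤ`), let `H = G ∖ F` be a
subgame with reducing potential `φ_H`, and let `vv'` be an edge from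
`H⁺ ∩ V_Min` to `F` minimising `w(vv') + supΣ^N(v') − φ_H(v)`. Then
`supΣ^N(v) = supΣ^N(v') + w(vv')`. -/
theorem statement10 {V : Type*} [Fintype V] (G : MPGame V)
    (hz : G.NoZeroCycle)
    (F : Set V) (hNF : G.Nset ⊆ F)
    (g : V → ℤ) (hg : ∀ u ∈ F, G.supSigmaVal G.Nset u = ((g u : ℝ) : EReal))
    (hsub : ∀ u ∈ Fᶜ, ∃ u' ∈ Fᶜ, G.E u u')
    (φH : V → ℤ) (hred : (G.pot φH).ReducedOn Fᶜ)
    (v v' : V)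
    (hv : (G.pot φH).ZPr Fᶜ v) (hvMin : G.IsMin v)
    (hvv' : G.E v v') (hv'F : v' ∈ F)
    (hmin : ∀ u u', (G.pot φH).ZPr Fᶜ u → G.IsMin u → G.E u u' → u' ∈ F →
      G.w v v' + g v' - φH v ≤ G.w u u' + g u' - φH u) :
    G.supSigmaVal G.Nset v = ((g v' + G.w v v' : ℝ) : EReal) := by
  classical
  have hvD : v ∈ Fᶜ := hv.memD
  have hvF : v ∉ F := hvD
  -- the chosen edge has nonnegative weight, otherwise `v ∈ N ⊆ F`
  have hwv : 0 ≤ G.w v v' := by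
    by_contra hneg
    exact hvF (hNF ⟨Set.mem_univ v, Or.inl ⟨hvMin, v', Set.mem_univ v', hvv', by omega⟩⟩)
  have hgv' : 0 ≤ g v' := by
    have h0 := supSigmaVal_nonneg G G.Nset v'
    rw [hg v' hv'F] at h0
    exact_mod_cast h0
  -- ### Part A : lower bound
  have lowerA : (((G.w v v' + g v' : ℤ) : ℝ) : EReal) ≤ G.supSigmaVal G.Nset v := by
    show _ ≤ ⨅ σ : {σ : V → V // G.Legal σ},
      ⨆ π : {π : G.Path // π.vert 0 = v ∧ π.ConsMin σ.1}, supSigma G.Nset π.1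
    refine le_iInf fun σ => ereal_le_of_forall_real_lt fun c hc => ?_
    -- build Max's answer to σ
    have hstep : ∀ u : V, ∃ u1 : V, G.E u u1 ∧ (G.IsMin u → u1 = σ.1 u) ∧
        (¬ G.IsMin u → (G.pot φH).ZPr Fᶜ u →
          (G.pot φH).ZPr Fᶜ u1 ∧ 0 ≤ (G.pot φH).w u u1) := by
      intro u
      by_cases hm : G.IsMin u
      · exact ⟨σ.1 u, σ.2 u, fun _ => rfl, fun h => absurd hm h⟩
      · by_cases hzp : (G.pot φH).ZPr Fᶜ u
        · obtain ⟨u1, hu1D, hE, hw, hzp1⟩ := (hred.2 u hzp).1 hm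
          exact ⟨u1, hE, fun h => absurd h hm, fun _ _ => ⟨hzp1, hw⟩⟩
        · exact ⟨(G.sinkless u).choose, (G.sinkless u).choose_spec,
            fun h => absurd h hm, fun _ h => absurd h hzp⟩
    choose f hfE hfMin hfZ using hstep
    set π0 : G.Path := iterPath G f hfE v with hπ0def
    have hcons0 : π0.ConsMin σ.1 := iterPath_consMin _ _ _ _ hfMin
    have hvert0 : π0.vert 0 = v := rfl
    have hinv : ∀ i, (G.pot φH).ZPr Fᶜ (π0.vert i) →
        (π0.vert (i + 1) ∈ F ∧ G.IsMin (π0.vert i)) ∨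
        ((G.pot φH).ZPr Fᶜ (π0.vert (i + 1)) ∧
          0 ≤ (G.pot φH).w (π0.vert i) (π0.vert (i + 1))) := by
      intro i hu
      rw [iterPath_vert_succ]
      by_cases hm : G.IsMin (π0.vert i)
      · rw [hfMin _ hm]
        by_cases hF : σ.1 (π0.vert i) ∈ F
        · exact Or.inl ⟨hF, hm⟩
        · have h2 := (hred.2 _ hu).2 hm (σ.1 (π0.vert i)) hF (σ.2 _)
          exact Or.inr ⟨h2.2, h2.1⟩
      · exact Or.inr (hfZ _ hm hu)
    by_cases hA : ∀ i, (G.pot φH).ZPr Fᶜ (π0.vert i)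
    · -- the play never leaves ZP : partial sums are unbounded
      have hedge : ∀ i, 0 ≤ (G.pot φH).w (π0.vert i) (π0.vert (i + 1)) := by
        intro i
        rcases hinv i (hA i) with ⟨hF, _⟩ | ⟨_, hw⟩
        · exact absurd hF ((hA (i + 1)).memD)
        · exact hw
      have hedge' : ∀ i, 0 ≤ G.w (π0.vert i) (π0.vert (i + 1)) +
          φH (π0.vert (i + 1)) - φH (π0.vert i) := by
        intro i; simpa [MPGame.pot] using hedge i
      have hX : ∀ i, π0.vert i ∉ G.Nset := fun i hmem => (hA i).memD (hNF hmem)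
      set Sφ : ℕ → ℤ := fun k => π0.wsum k + φH (π0.vert k) - φH v with hSφ
      have hS0 : Sφ 0 = 0 := by simp [hSφ, Path.wsum_zero', hvert0]
      have hmono : Monotone Sφ := monotone_nat_of_le_succ (fun t => by
        have h := hedge' t
        simp only [hSφ, Path.wsum_succ']
        omega)
      have hgrow : ∀ k, ∃ j, k < j ∧ Sφ k + 1 ≤ Sφ j := by
        intro k
        have hkey : ∀ a b : ℕ, a < b → π0.vert (k + a) = π0.vert (k + b) →
            ∃ j, k < j ∧ Sφ k + 1 ≤ Sφ j := by
          intro a b hab heq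
          refine ⟨k + b, by omega, ?_⟩
          have hne := hz π0 (k + a) (k + b) (by omega) heq
          have h1 : Sφ (k + a) ≤ Sφ (k + b) := hmono (by omega)
          have h2 : Sφ k ≤ Sφ (k + a) := hmono (by omega)
          have h3 : Sφ (k + b) - Sφ (k + a) = π0.wsum (k + b) - π0.wsum (k + a) := by
            simp only [hSφ, heq]; ring
          omega
        obtain ⟨a, b, hab, heq⟩ :=
          Finite.exists_ne_map_eq_of_infinite (fun i : ℕ => π0.vert (k + i))
        rcases hab.lt_or_gt with hlt | hlt
        · exact hkey a b hlt heq
        · exact hkey b a hlt heq.symm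
      have hunb : ∀ n : ℕ, ∃ k, (n : ℤ) ≤ Sφ k := by
        intro n
        induction n with
        | zero => exact ⟨0, by simp [hS0]⟩
        | succ n ih =>
          obtain ⟨k, hk⟩ := ih
          obtain ⟨j, _, hj⟩ := hgrow k
          exact ⟨j, by push_cast; omega⟩
      haveI : Nonempty V := ⟨v⟩
      set M : ℤ := Finset.univ.sup' Finset.univ_nonempty φH with hMdef
      have hM : ∀ u, φH u ≤ M := fun u => Finset.le_sup' φH (Finset.mem_univ u)
      obtain ⟨z, hz'⟩ := exists_int_gt (c + (M : ℝ) - (φH v : ℝ))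
      obtain ⟨k, hk⟩ := hunb z.toNat
      have hwkZ : z - M + φH v ≤ π0.wsum k := by
        have h1 : (z : ℤ) ≤ Sφ k := le_trans (Int.self_le_toNat z) hk
        have h2 : π0.wsum k = Sφ k - φH (π0.vert k) + φH v := by
          simp only [hSφ]; ring
        have h3 : φH (π0.vert k) ≤ M := hM _
        omega
      have hwk : (c : ℝ) < ((π0.wsum k : ℤ) : ℝ) := by
        have h4 : ((z : ℝ)) - (M : ℝ) + (φH v : ℝ) ≤ ((π0.wsum k : ℤ) : ℝ) := by
          exact_mod_cast hwkZ
        push_cast at h4 ⊢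
        linarith
      refine lt_of_lt_of_le (lt_of_lt_of_le (EReal.coe_lt_coe_iff.mpr hwk)
        (coe_wsum_le_supSigma π0 k (fun i _ => hX i))) ?_
      exact le_iSup (fun π : {π : G.Path // π.vert 0 = v ∧ π.ConsMin σ.1} =>
        supSigma G.Nset π.1) ⟨π0, hvert0, hcons0⟩
    · -- the play leaves ZP : Min exits into F through a Min-edge
      push_neg at hA
      have hm := Nat.find_spec hA
      have hltm : ∀ i, i < Nat.find hA → (G.pot φH).ZPr Fᶜ (π0.vert i) :=
        fun i hi => not_not.mp (Nat.find_min hA hi)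
      have hn0 : Nat.find hA ≠ 0 := by
        intro h0; rw [h0] at hm; exact hm hv
      obtain ⟨m0, hm0eq⟩ := Nat.exists_eq_succ_of_ne_zero hn0
      rw [hm0eq] at hm hltm
      have hu_zp : (G.pot φH).ZPr Fᶜ (π0.vert m0) := hltm m0 (by omega)
      have hleft : π0.vert (m0 + 1) ∈ F ∧ G.IsMin (π0.vert m0) := by
        rcases hinv m0 hu_zp with h | ⟨hzp, _⟩
        · exact h
        · exact absurd hzp hm
      obtain ⟨huF, huMin⟩ := hleft
      have hedge : ∀ i, i < m0 → 0 ≤ G.w (π0.vert i) (π0.vert (i + 1)) +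
          φH (π0.vert (i + 1)) - φH (π0.vert i) := by
        intro i hi
        rcases hinv i (hltm i (by omega)) with ⟨hF, _⟩ | ⟨_, hw⟩
        · exact absurd hF ((hltm (i + 1) (by omega)).memD)
        · simpa [MPGame.pot] using hw
      have hsum0 : ∀ j, j ≤ m0 → 0 ≤ π0.wsum j + φH (π0.vert j) - φH v := by
        intro j
        induction j with
        | zero => intro _; simp [Path.wsum_zero', hvert0]
        | succ j ih =>
          intro hj
          have h1 := ih (by omega)
          have h2 := hedge j (by omega)
          rw [Path.wsum_succ']
          omega
      have hkey := hmin (π0.vert m0) (π0.vert (m0 + 1)) hu_zp huMin (π0.adj m0) huF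
      have hδ : (G.w v v' + g v' : ℤ) ≤ π0.wsum (m0 + 1) + g (π0.vert (m0 + 1)) := by
        have h1 := hsum0 m0 le_rfl
        have h2 : π0.wsum (m0 + 1) = π0.wsum m0 + G.w (π0.vert m0) (π0.vert (m0 + 1)) :=
          Path.wsum_succ' _ _
        omega
      -- continue from `π0.vert (m0+1) ∈ F` nearly optimally against σ
      have hsup2 : ((g (π0.vert (m0 + 1)) : ℝ) : EReal) ≤
          ⨆ ρ : {ρ : G.Path // ρ.vert 0 = π0.vert (m0 + 1) ∧ ρ.ConsMin σ.1},
            supSigma G.Nset ρ.1 := by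
        rw [← hg _ huF]
        exact iInf_le (fun σ' : {σ : V → V // G.Legal σ} =>
          ⨆ ρ : {ρ : G.Path // ρ.vert 0 = π0.vert (m0 + 1) ∧ ρ.ConsMin σ'.1},
            supSigma G.Nset ρ.1) σ
      have hclt : (((c - (π0.wsum (m0 + 1) : ℝ)) : ℝ) : EReal) <
          ⨆ ρ : {ρ : G.Path // ρ.vert 0 = π0.vert (m0 + 1) ∧ ρ.ConsMin σ.1},
            supSigma G.Nset ρ.1 := by
        refine lt_of_lt_of_le (EReal.coe_lt_coe_iff.mpr ?_) hsup2
        have h4 : ((G.w v v' + g v' : ℤ) : ℝ) ≤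
            ((π0.wsum (m0 + 1) : ℤ) : ℝ) + ((g (π0.vert (m0 + 1)) : ℤ) : ℝ) := by
          exact_mod_cast hδ
        push_cast at h4 hc ⊢
        linarith
      obtain ⟨ρs, hρs⟩ := lt_iSup_iff.mp hclt
      unfold supSigma at hρs
      obtain ⟨⟨k, hkval⟩, hk⟩ := lt_iSup_iff.mp hρs
      have hkR : (c : ℝ) - ((π0.wsum (m0 + 1) : ℤ) : ℝ) < ((ρs.1.wsum k : ℤ) : ℝ) :=
        EReal.coe_lt_coe_iff.mp hk
      set χ : G.Path := concatPath π0 ρs.1 (m0 + 1) ρs.2.1 with hχdef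
      have hχ0 : χ.vert 0 = v := by rw [hχdef, concatPath_vert_zero]; exact hvert0
      have hχc : χ.ConsMin σ.1 :=
        concatPath_consMin _ (fun i _ hi => hcons0 i hi) ρs.2.2
      have hχval : ∀ j, j < (m0 + 1) + k → χ.vert j ∉ G.Nset := by
        intro j hj
        by_cases hjm : j < m0 + 1
        · rw [hχdef, concatPath_vert_lt hjm]
          exact fun hmem => (hltm j (by omega)).memD (hNF hmem)
        · rw [hχdef, concatPath_vert_ge (by omega)]
          exact hkval _ (by omega)
      have hχw : χ.wsum ((m0 + 1) + k) = π0.wsum (m0 + 1) + ρs.1.wsum k :=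
        concatPath_wsum k
      refine lt_of_lt_of_le (lt_of_lt_of_le (EReal.coe_lt_coe_iff.mpr ?_)
        (coe_wsum_le_supSigma χ ((m0 + 1) + k) hχval)) ?_
      · rw [hχw]; push_cast at hkR ⊢; linarith
      · exact le_iSup (fun π : {π : G.Path // π.vert 0 = v ∧ π.ConsMin σ.1} =>
          supSigma G.Nset π.1) ⟨χ, hχ0, hχc⟩
  -- ### Part B : upper bound
  haveI : Nonempty {σ : V → V // G.Legal σ} :=
    ⟨⟨fun u => (G.sinkless u).choose, fun u => (G.sinkless u).choose_spec⟩⟩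
  obtain ⟨τ0, hτ0⟩ := Finite.exists_min (fun σ0 : {σ : V → V // G.Legal σ} =>
    ⨆ π : {π : G.Path // π.vert 0 = v' ∧ π.ConsMin σ0.1}, supSigma G.Nset π.1)
  have hτsup : (⨆ π : {π : G.Path // π.vert 0 = v' ∧ π.ConsMin τ0.1},
      supSigma G.Nset π.1) ≤ ((g v' : ℝ) : EReal) := by
    rw [← hg v' hv'F]
    exact le_iInf hτ0
  -- a σ'-consistent N-free play from v' reaching v has weight at most -w(v,v')
  have keyS : ∀ ρ : G.Path, ρ.vert 0 = v' → ρ.ConsMin τ0.1 → ∀ m, ρ.vert m = v →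
      (∀ j, j < m → ρ.vert j ∉ G.Nset) → ρ.wsum m ≤ -G.w v v' := by
    intro ρ h0 hconsρ m hmv hval
    have hμ : ∀ μ : G.Path, μ.vert 0 = v → μ.ConsMin τ0.1 → ∀ k,
        (∀ i, i < k → μ.vert i ∉ G.Nset) → ρ.wsum m + μ.wsum k ≤ g v' := by
      intro μ hμ0 hμc k hμval
      have hj : μ.vert 0 = ρ.vert m := by rw [hμ0, hmv]
      set χ : G.Path := concatPath ρ μ m hj with hχdef
      have hχ0 : χ.vert 0 = v' := by rw [hχdef, concatPath_vert_zero, h0]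
      have hχc : χ.ConsMin τ0.1 :=
        concatPath_consMin _ (fun i _ hi => hconsρ i hi) hμc
      have hχval : ∀ j, j < m + k → χ.vert j ∉ G.Nset := by
        intro j hjk
        by_cases hjm : j < m
        · rw [hχdef, concatPath_vert_lt hjm]; exact hval j hjm
        · rw [hχdef, concatPath_vert_ge (by omega)]; exact hμval _ (by omega)
      have hle : ((χ.wsum (m + k) : ℝ) : EReal) ≤ ((g v' : ℝ) : EReal) :=
        le_trans (coe_wsum_le_supSigma _ _ hχval)
          (le_trans (le_iSup (fun π : {π : G.Path // π.vert 0 = v' ∧ π.ConsMin τ0.1} =>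
            supSigma G.Nset π.1) ⟨χ, hχ0, hχc⟩) hτsup)
      have hw : χ.wsum (m + k) = ρ.wsum m + μ.wsum k := concatPath_wsum k
      rw [hw] at hle
      exact_mod_cast hle
    have hub : G.supSigmaVal G.Nset v ≤ (((g v' - ρ.wsum m : ℤ) : ℝ) : EReal) := by
      refine le_trans (iInf_le (fun σ' : {σ : V → V // G.Legal σ} =>
        ⨆ π : {π : G.Path // π.vert 0 = v ∧ π.ConsMin σ'.1}, supSigma G.Nset π.1) τ0)
        (iSup_le ?_)
      rintro ⟨μ, hμ0, hμc⟩
      show supSigma G.Nset μ ≤ _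
      unfold supSigma
      refine iSup_le ?_
      rintro ⟨k, hk⟩
      have h := hμ μ hμ0 hμc k hk
      refine EReal.coe_le_coe_iff.mpr ?_
      have h' : ((ρ.wsum m : ℤ) : ℝ) + ((μ.wsum k : ℤ) : ℝ) ≤ ((g v' : ℤ) : ℝ) := by
        exact_mod_cast h
      push_cast at h' ⊢
      linarith
    have h := le_trans lowerA hub
    have hint : (G.w v v' + g v' : ℤ) ≤ g v' - ρ.wsum m := by exact_mod_cast h
    omega
  set σu : V → V := Function.update τ0.1 v v' with hσudef
  have hσuleg : G.Legal σu := by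
    intro u
    by_cases hu : u = v
    · subst hu; rw [hσudef, Function.update_self]; exact hvv'
    · rw [hσudef, Function.update_of_ne hu]; exact τ0.2 u
  have main : ∀ k, ∀ π : G.Path, π.vert 0 = v → π.ConsMin σu →
      (∀ i, i < k → π.vert i ∉ G.Nset) →
      π.wsum k ≤ G.w v v' + g v' ∧ (π.vert k = v → π.wsum k ≤ 0) := by
    intro k
    induction k using Nat.strong_induction_on with
    | _ k IH =>
    intro π hπ0 hπc hπval
    rcases Nat.eq_zero_or_pos k with rfl | hkpos
    · rw [Path.wsum_zero']
      exact ⟨by omega, fun _ => le_rfl⟩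
    · set t := Nat.findGreatest (fun j => π.vert j = v) (k - 1) with htdef
      have htle : t ≤ k - 1 := Nat.findGreatest_le _
      have htv : π.vert t = v := by
        have h := Nat.findGreatest_spec (P := fun j => π.vert j = v) (m := 0)
          (n := k - 1) (by omega) hπ0
        rw [htdef]; exact h
      have hgt : ∀ j, t < j → j ≤ k - 1 → π.vert j ≠ v := by
        intro j h1 h2
        have h := Nat.findGreatest_is_greatest (P := fun j => π.vert j = v)
          (n := k - 1) (htdef ▸ h1) h2
        exact h
      have ht0 : π.wsum t ≤ 0 :=
        (IH t (by omega) π hπ0 hπc (fun i hi => hπval i (by omega))).2 htv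
      have hstep1 : π.vert (t + 1) = v' := by
        have h1 := hπc t (by rw [htv]; exact hvMin)
        rw [htv] at h1
        rw [h1, hσudef, Function.update_self]
      have hws1 : π.wsum (t + 1) = π.wsum t + G.w v v' := by
        rw [Path.wsum_succ', htv, hstep1]
      by_cases hk1 : t + 1 = k
      · constructor
        · rw [← hk1, hws1]; omega
        · intro hkv
          rw [← hk1, hstep1] at hkv
          exact absurd (hkv ▸ hv'F) hvF
      · have htk : t + 1 < k := by omega
        set h : V → V := fun u => if G.IsMin u then τ0.1 u else (G.sinkless u).choose
          with hhdef
        have hhE : ∀ u, G.E u (h u) := by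
          intro u
          rw [hhdef]
          by_cases hm : G.IsMin u
          · simp only [if_pos hm]; exact τ0.2 u
          · simp only [if_neg hm]; exact (G.sinkless u).choose_spec
        set dπ := dropPath π (t + 1) with hdπdef
        set m := k - (t + 1) with hmdef
        have hμ0 : (iterPath G h hhE (π.vert k)).vert 0 = dπ.vert m := by
          rw [iterPath_vert_zero, hdπdef, dropPath_vert]
          congr 1; omega
        set ρ := concatPath dπ (iterPath G h hhE (π.vert k)) m hμ0 with hρdef
        have hρ0 : ρ.vert 0 = v' := by
          rw [hρdef, concatPath_vert_zero, hdπdef, dropPath_vert, Nat.add_zero]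
          exact hstep1
        have hρc : ρ.ConsMin τ0.1 := by
          refine concatPath_consMin _ ?_
            (iterPath_consMin _ _ _ _ (fun u hu => by rw [hhdef]; simp [hu]))
          intro i hi hmin'
          have hne : π.vert (t + 1 + i) ≠ v := hgt (t + 1 + i) (by omega) (by omega)
          have h1 := hπc (t + 1 + i) hmin'
          rw [hσudef, Function.update_of_ne hne] at h1
          show π.vert (t + 1 + (i + 1)) = _
          rw [show t + 1 + (i + 1) = (t + 1 + i) + 1 by omega]
          exact h1
        have hρval : ∀ j, j < m → ρ.vert j ∉ G.Nset := by
          intro j hj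
          rw [hρdef, concatPath_vert_lt hj, hdπdef, dropPath_vert]
          exact hπval (t + 1 + j) (by omega)
        have hρm : ρ.wsum m = π.wsum k - π.wsum (t + 1) := by
          have h1 := concatPath_wsum (π := dπ) (μ := iterPath G h hhE (π.vert k))
            (m := m) (h := hμ0) 0
          rw [Nat.add_zero, Path.wsum_zero', add_zero] at h1
          rw [hρdef, h1, hdπdef, dropPath_wsum, show t + 1 + m = k by omega]
        have hS : ρ.wsum m ≤ g v' := by
          have h1 : ((ρ.wsum m : ℝ) : EReal) ≤ ((g v' : ℝ) : EReal) :=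
            le_trans (coe_wsum_le_supSigma ρ m hρval)
              (le_trans (le_iSup
                (fun π : {π : G.Path // π.vert 0 = v' ∧ π.ConsMin τ0.1} =>
                  supSigma G.Nset π.1) ⟨ρ, hρ0, hρc⟩) hτsup)
          exact_mod_cast h1
        constructor
        · omega
        · intro hkv
          have hρmv : ρ.vert m = v := by
            rw [hρdef, concatPath_vert_ge le_rfl, Nat.sub_self, iterPath_vert_zero]
            exact hkv
          have h2 := keyS ρ hρ0 hρc m hρmv hρval
          omega
  have upper : G.supSigmaVal G.Nset v ≤ (((G.w v v' + g v' : ℤ) : ℝ) : EReal) := by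
    refine le_trans (iInf_le (fun σ' : {σ : V → V // G.Legal σ} =>
      ⨆ π : {π : G.Path // π.vert 0 = v ∧ π.ConsMin σ'.1}, supSigma G.Nset π.1)
      ⟨σu, hσuleg⟩) (iSup_le ?_)
    rintro ⟨π, hπ0, hπc⟩
    show supSigma G.Nset π ≤ _
    unfold supSigma
    refine iSup_le ?_
    rintro ⟨k, hk⟩
    exact EReal.coe_le_coe_iff.mpr
      (by exact_mod_cast (main k π hπ0 hπc hk).1)
  have hfinal : G.supSigmaVal G.Nset v = (((G.w v v' + g v' : ℤ) : ℝ) : EReal) :=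
    le_antisymm upper lowerA
  rw [hfinal]
  push_cast
  exact add_comm _ _
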